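/- Let Ω ⊂ ℂⁿ be a domain and φ a C² plurisubharmonic function on Ω. If det(Hess_ℂ φ) = 0 everywhere on Ω, then φ is maximal: for every relatively compact open U ⋐ Ω and every plurisubharmonic v on a neighborhood of Ū with v ≤ φ on ∂U, one has v ≤ φ on U. (C² case of Błocki's characterization MA(φ)=0 ⟺ φ maximal.) -/

import Mathlib

open MeasureTheory Metric

/-- Second real directional derivative. -/
noncomputable def D2 {E : Type*} [NormedAddCommGroup E] [NormedSpace ℝ E]
    (f : E → ℝ) (z v w : E) : ℝ :=
  fderiv ℝ (fun x => fderiv ℝ f x v) z w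

/-- The Levi form (complex Hessian) ∂²f/∂z∂z̄ evaluated at directions (v, w̄). -/
noncomputable def levi {E : Type*} [NormedAddCommGroup E] [NormedSpace ℂ E]
    (f : E → ℝ) (z v w : E) : ℂ :=
  (1/4 : ℂ) * (((D2 f z v w + D2 f z (Complex.I • v) (Complex.I • w) : ℝ) : ℂ)
    + Complex.I * ((D2 f z (Complex.I • v) w - D2 f z v (Complex.I • w) : ℝ) : ℂ))

/-- Plurisubharmonicity expressed through upper semicontinuity and the submean
inequality on circles inside complex lines. -/
def SubmeanOn {E : Type*} [NormedAddCommGroup E] [NormedSpace ℂ E]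
    (u : E → ℝ) (Ω : Set E) : Prop :=
  UpperSemicontinuousOn u Ω ∧
  ∀ z ∈ Ω, ∀ (v : E) (r : ℝ), 0 < r →
    (∀ t : ℂ, ‖t‖ ≤ r → z + t • v ∈ Ω) →
    IntervalIntegrable
      (fun θ : ℝ => u (z + ((r : ℂ) * Complex.exp ((θ : ℂ) * Complex.I)) • v))
      MeasureTheory.volume 0 (2 * Real.pi) ∧
    u z ≤ (1 / (2 * Real.pi)) *
      ∫ θ in (0:ℝ)..(2 * Real.pi), u (z + ((r : ℂ) * Complex.exp ((θ : ℂ) * Complex.I)) • v)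

/-- The complex Hessian matrix (∂²f/∂z_i∂z̄_j) of f : ℂⁿ → ℝ at z. -/
noncomputable def cHess {n : ℕ} (f : (Fin n → ℂ) → ℝ) (z : Fin n → ℂ) :
    Matrix (Fin n) (Fin n) ℂ :=
  Matrix.of fun i j => levi f z (Pi.single i 1) (Pi.single j 1)

/-!
If `v > φ` somewhere in `U`, then for small `ε > 0` the function `v + ε ∑ |zᵢ|² - φ` attains its
maximum over `closure U` at a point `z ∈ U`. As `det Hess_ℂ φ(z) = 0`, there is `a ≠ 0` with
`Hess_ℂ φ(z) a = 0`, so `w ↦ φ(z + w a)` has vanishing Laplacian at `0` while `w ↦ ε ∑ |zᵢ + w aᵢ|²`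
has Laplacian `4ε ∑ |aᵢ|² > 0`. By Taylor's formula, on a small circle `|w| = r` the function
`w ↦ ε ∑ |zᵢ + w aᵢ|² - φ(z + w a)` then exceeds its value at the centre on average by `≳ ε r²`,
and together with the sub-mean value inequality for `v` this contradicts maximality at `z`.
-/

open Complex Real Filter Topology Asymptotics
open scoped Matrix

theorem Complex.smul_eq_re_smul_add_im_smul {E : Type*} [AddCommGroup E] [Module ℂ E]
    (c : ℂ) (v : E) : c • v = c.re • v + c.im • (I • v) := by
  conv_lhs => rw [← re_add_im c]
  rw [add_smul, mul_smul, coe_smul, coe_smul]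

theorem D2_eq_fderiv_fderiv {F : Type*} [NormedAddCommGroup F] [NormedSpace ℝ F] {f : F → ℝ}
    {z : F} (hd : DifferentiableAt ℝ (fderiv ℝ f) z) (v w : F) :
    D2 f z v w = fderiv ℝ (fderiv ℝ f) z w v := by
  have h : HasFDerivAt (fun x => fderiv ℝ f x v)
      ((ContinuousLinearMap.apply ℝ ℝ v).comp (fderiv ℝ (fderiv ℝ f) z)) z :=
    (ContinuousLinearMap.apply ℝ ℝ v).hasFDerivAt.comp z hd.hasFDerivAt
  simp [D2, h.fderiv]

section LeviForm

variable {E : Type*} [NormedAddCommGroup E] [NormedSpace ℂ E]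

noncomputable def leviForm (B : E →L[ℝ] E →L[ℝ] ℝ) : E →ₗ⋆[ℂ] E →ₗ[ℂ] ℂ :=
  LinearMap.mk₂'ₛₗ (starRingEnd ℂ) (RingHom.id ℂ)
    (fun v w => (1/4 : ℂ) * (((B w v + B (I • w) (I • v) : ℝ) : ℂ)
      + I * ((B w (I • v) - B (I • w) v : ℝ) : ℂ)))
    (fun v v' w => by simp only [smul_add, map_add]; push_cast; ring)
    (fun c v w => by
      have hIc : I • c • v = c.re • (I • v) + c.im • (-v) := by
        rw [smul_comm, c.smul_eq_re_smul_add_im_smul, smul_smul, I_mul_I, neg_one_smul]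
      have hc : starRingEnd ℂ c = c.re - c.im * I := by simp [Complex.ext_iff]
      rw [hIc, c.smul_eq_re_smul_add_im_smul, hc]
      simp only [map_add, map_smul, map_neg, smul_eq_mul]
      push_cast
      linear_combination (1/4 * (c.im * (B w (I • v) - B (I • w) v)) : ℂ) * I_sq)
    (fun v w w' => by simp only [smul_add, map_add, add_apply]; push_cast; ring)
    (fun c v w => by
      have hIc : I • c • w = c.re • (I • w) + c.im • (-w) := by
        rw [smul_comm, c.smul_eq_re_smul_add_im_smul, smul_smul, I_mul_I, neg_one_smul]
      rw [hIc, c.smul_eq_re_smul_add_im_smul]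
      conv_rhs => rw [← re_add_im c]
      simp only [map_add, map_smul, map_neg, smul_eq_mul, add_apply,
        smul_apply, neg_apply, RingHom.id_apply]
      push_cast
      linear_combination (1/4 * (c.im * (B (I • w) v - B w (I • v))) : ℂ) * I_sq)

theorem re_leviForm_self (B : E →L[ℝ] E →L[ℝ] ℝ) (v : E) :
    (leviForm B v v).re = (B v v + B (I • v) (I • v)) / 4 := by
  simp [leviForm, div_eq_inv_mul]

theorem levi_eq_leviForm {f : E → ℝ} {z : E} (hd : DifferentiableAt ℝ (fderiv ℝ f) z)
    (v w : E) : levi f z v w = leviForm (fderiv ℝ (fderiv ℝ f) z) v w := by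
  simp only [levi, D2_eq_fderiv_fderiv hd]
  rfl

end LeviForm

theorem toMatrixₛₗ₂'_leviForm {n : ℕ} {f : (Fin n → ℂ) → ℝ} {z : Fin n → ℂ}
    (hd : DifferentiableAt ℝ (fderiv ℝ f) z) :
    LinearMap.toMatrixₛₗ₂' ℂ (leviForm (fderiv ℝ (fderiv ℝ f) z)) = cHess f z := by
  ext i j
  rw [LinearMap.toMatrixₛₗ₂'_apply, cHess, Matrix.of_apply, levi_eq_leviForm hd]

theorem fderiv_fderiv_add_I_smul_eq_zero_of_cHess_mulVec_eq_zero {n : ℕ}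
    {f : (Fin n → ℂ) → ℝ} {z b : Fin n → ℂ} (hd : DifferentiableAt ℝ (fderiv ℝ f) z)
    (hb : cHess f z *ᵥ b = 0) :
    fderiv ℝ (fderiv ℝ f) z b b + fderiv ℝ (fderiv ℝ f) z (I • b) (I • b) = 0 := by
  have hzero : leviForm (fderiv ℝ (fderiv ℝ f) z) b b = 0 := by
    rw [← Matrix.toLinearMapₛₗ₂'_toMatrix' (R := ℂ) (B := leviForm (fderiv ℝ (fderiv ℝ f) z)),
      toMatrixₛₗ₂'_leviForm hd, Matrix.toLinearMapₛₗ₂'_apply]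
    refine Finset.sum_eq_zero fun i _ => ?_
    have hi : ∑ j, cHess f z i j * b j = 0 := congrFun hb i
    simp only [smul_eq_mul, RingHom.id_apply, ← Finset.mul_sum, mul_comm (b _), hi, mul_zero]
  have hre := re_leviForm_self (fderiv ℝ (fderiv ℝ f) z) b
  rw [hzero, zero_re] at hre
  linarith

theorem mul_circleMap_zero_of_norm_eq_one {u : ℂ} (hu : ‖u‖ = 1) (R θ : ℝ) :
    u * circleMap 0 R θ = circleMap 0 R (θ + arg u) := by
  have hu' : circleMap 0 1 (arg u) = u := by
    simpa [circleMap_zero, hu] using norm_mul_exp_arg_mul_I u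
  rw [← hu', circleMap_zero_mul, one_mul, add_comm, hu']

section CircleRotation

variable {E : Type*} [NormedAddCommGroup E] {g : ℂ → E} {R : ℝ} {u : ℂ}

theorem CircleIntegrable.comp_mul (hg : CircleIntegrable g 0 R) (hu : ‖u‖ = 1) :
    CircleIntegrable (fun w => g (u * w)) 0 R := by
  have hper : Function.Periodic (fun θ => g (circleMap 0 R θ)) (2 * π) :=
    fun θ => by simp only [periodic_circleMap 0 R θ]
  have h := (hper.intervalIntegrable₀ two_pi_pos.ne' hg (arg u) (2 * π + arg u)).comp_add_right
    (arg u)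
  simp only [sub_self, add_sub_cancel_right] at h
  simpa only [CircleIntegrable, mul_circleMap_zero_of_norm_eq_one hu] using h

theorem circleAverage_comp_mul [NormedSpace ℝ E] [CompleteSpace E] (hu : ‖u‖ = 1) :
    circleAverage (fun w => g (u * w)) 0 R = circleAverage g 0 R := by
  rw [circleAverage_eq_integral_add (f := g) (arg u), circleAverage]
  simp only [mul_circleMap_zero_of_norm_eq_one hu]

end CircleRotation

/-- Summing over the four quarter turns `±w, ±i w` kills the `ℝ`-linear part of a quadratic
polynomial in `w` and turns its quadratic part into `|w|²` times its Laplacian. -/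
def quarterTurnSum (g : ℂ → ℝ) (w : ℂ) : ℝ := g w + g (-w) + g (I * w) + g (-(I * w))

theorem quarterTurnSum_add (g h : ℂ → ℝ) (w : ℂ) :
    quarterTurnSum (fun w => g w + h w) w = quarterTurnSum g w + quarterTurnSum h w := by
  simp only [quarterTurnSum]
  ring

theorem quarterTurnSum_le_of_forall_norm_eq {g : ℂ → ℝ} {w : ℂ} {c : ℝ}
    (h : ∀ w', ‖w'‖ = ‖w‖ → g w' ≤ c) : quarterTurnSum g w ≤ 4 * c := by
  have h₁ := h w rfl
  have h₂ := h (-w) (norm_neg w)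
  have h₃ := h (I * w) (by simp)
  have h₄ := h (-(I * w)) (by simp)
  simp only [quarterTurnSum]
  linarith

theorem circleAverage_le_of_quarterTurnSum_le {g : ℂ → ℝ} {R c : ℝ}
    (hg : CircleIntegrable g 0 R) (h : ∀ w ∈ sphere (0 : ℂ) |R|, quarterTurnSum g w ≤ 4 * c) :
    circleAverage g 0 R ≤ c := by
  have hneg : ‖(-1 : ℂ)‖ = 1 := by simp
  have hnegI : ‖-I‖ = 1 := by simp
  have hg₁ := hg.comp_mul hneg
  have hg₂ := hg.comp_mul norm_I
  have hg₃ := hg.comp_mul hnegI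
  have e : quarterTurnSum g = fun w => g w + g (-1 * w) + g (I * w) + g (-I * w) := by
    ext w
    simp [quarterTurnSum]
  have hint : CircleIntegrable (quarterTurnSum g) 0 R :=
    e ▸ ((hg.fun_add hg₁).fun_add hg₂).fun_add hg₃
  have hsum : circleAverage (quarterTurnSum g) 0 R = 4 * circleAverage g 0 R := by
    rw [e, circleAverage_fun_add ((hg.fun_add hg₁).fun_add hg₂) hg₃,
      circleAverage_fun_add (hg.fun_add hg₁) hg₂, circleAverage_fun_add hg hg₁,
      circleAverage_comp_mul hneg, circleAverage_comp_mul norm_I, circleAverage_comp_mul hnegI]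
    ring
  linarith [circleAverage_mono_on_of_le_circle hint h]

theorem ContDiffAt.isLittleO_sub_taylor_two {F : Type*} [NormedAddCommGroup F] [NormedSpace ℝ F]
    {f : F → ℝ} {z : F} (hf : ContDiffAt ℝ 2 f z) :
    (fun h => f (z + h) - f z - fderiv ℝ f z h - fderiv ℝ (fderiv ℝ f) z h h / 2)
      =o[𝓝 0] fun h => ‖h‖ ^ 2 := by
  set B := fderiv ℝ (fderiv ℝ f) z
  have hsymm : ∀ v w, B v w = B w v := hf.isSymmSndFDerivAt (by simp)
  have hB : HasFDerivAt (fderiv ℝ f) B z :=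
    ((hf.fderiv_right (m := 1) le_rfl).differentiableAt one_ne_zero).hasFDerivAt
  obtain ⟨ρ, hρ, hdiff⟩ : ∃ ρ > 0, ∀ h ∈ ball (0 : F) ρ, DifferentiableAt ℝ f (z + h) := by
    have hnear : ∀ᶠ x in 𝓝 z, DifferentiableAt ℝ f x :=
      (hf.eventually (by simp)).mono fun x hx => hx.differentiableAt two_ne_zero
    have hshift : Tendsto (fun h : F => z + h) (𝓝 0) (𝓝 z) := by
      simpa using (continuous_const_add z).tendsto (0 : F)
    exact Metric.eventually_nhds_iff_ball.1 (hshift.eventually hnear)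
  have hderiv : ∀ h ∈ ball (0 : F) ρ, HasFDerivWithinAt
      (fun h => f (z + h) - f z - fderiv ℝ f z h - B h h / 2)
      (fderiv ℝ f (z + h) - fderiv ℝ f z - B h) (ball 0 ρ) h := by
    intro h hh
    have hquad : HasFDerivAt (fun h => B h h / 2) (B h) h := by
      have hBB : HasFDerivAt (fun h => B h h) (B h ∘L ContinuousLinearMap.id ℝ F + B.flip h) h :=
        B.hasFDerivAt.clm_apply (hasFDerivAt_id h)
      have e : (2⁻¹ : ℝ) • (B h ∘L ContinuousLinearMap.id ℝ F + B.flip h) = B h := by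
        ext k
        simp only [ContinuousLinearMap.comp_id, smul_add, add_apply, smul_apply, hsymm h k,
          smul_eq_mul, ContinuousLinearMap.flip_apply]
        ring
      simpa only [e, ← div_eq_mul_inv] using hBB.mul_const (2⁻¹ : ℝ)
    exact ((((hdiff h hh).hasFDerivAt.comp h ((hasFDerivAt_id h).const_add z)).sub_const
      (f z)).sub (fderiv ℝ f z).hasFDerivAt |>.sub hquad).hasFDerivWithinAt
  have hsmall : (fun h => fderiv ℝ f (z + h) - fderiv ℝ f z - B h)
      =o[𝓝[ball 0 ρ] 0] fun h => ‖h - 0‖ ^ 1 := by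
    simpa using ((hasFDerivAt_iff_isLittleO_nhds_zero.1 hB).norm_right).mono nhdsWithin_le_nhds
  have := (convex_ball (0 : F) ρ).isLittleO_pow_succ (mem_ball_self hρ) hderiv hsmall
  simpa [(isOpen_ball).nhdsWithin_eq (mem_ball_self hρ)] using this

theorem ContDiffAt.eventually_quarterTurnSum_le {E : Type*} [NormedAddCommGroup E]
    [NormedSpace ℂ E] {f : E → ℝ} {z : E} (hf : ContDiffAt ℝ 2 f z) (a : E) {η : ℝ}
    (hη : 0 < η) :
    ∀ᶠ w in 𝓝 (0 : ℂ), quarterTurnSum (fun w => f (z + w • a)) w ≤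
      4 * f z + (fderiv ℝ (fderiv ℝ f) z (w • a) (w • a)
        + fderiv ℝ (fderiv ℝ f) z (I • w • a) (I • w • a)) + 4 * η * ‖w • a‖ ^ 2 := by
  set L := fderiv ℝ f z
  set B := fderiv ℝ (fderiv ℝ f) z
  have htaylor : ∀ c : ℂ, ‖c‖ = 1 → ∀ᶠ w in 𝓝 (0 : ℂ),
      f (z + c • w • a) ≤ f z + L (c • w • a) + B (c • w • a) (c • w • a) / 2
        + η * ‖w • a‖ ^ 2 := by
    intro c hc
    have hlim : Tendsto (fun w : ℂ => c • w • a) (𝓝 0) (𝓝 0) :=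
      (continuous_const.smul (continuous_id.smul continuous_const)).tendsto' 0 0 (by simp)
    filter_upwards [hlim.eventually (hf.isLittleO_sub_taylor_two.bound hη)] with w hw
    rw [Real.norm_eq_abs, norm_pow, norm_norm, norm_smul, hc, one_mul] at hw
    linarith [(abs_le.1 hw).2]
  filter_upwards [htaylor 1 (by simp), htaylor (-1) (by simp), htaylor I norm_I,
    htaylor (-I) (by simp)] with w h₁ h₂ h₃ h₄
  simp only [one_smul, neg_smul, map_neg, neg_apply, neg_neg] at h₁ h₂ h₃ h₄
  simp only [quarterTurnSum, neg_smul, mul_smul]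
  linarith

section NormSqSum

variable {ι : Type*} [Fintype ι]

/-- The squared Euclidean norm (the norm `‖x‖` of `ι → ℂ` is the sup norm). -/
def normSqSum (x : ι → ℂ) : ℝ := ∑ i, normSq (x i)

theorem continuous_normSqSum : Continuous (normSqSum (ι := ι)) :=
  continuous_finsetSum _ fun i _ => continuous_normSq.comp (continuous_apply i)

theorem normSqSum_add_add_normSqSum_sub (x y : ι → ℂ) :
    normSqSum (x + y) + normSqSum (x - y) = 2 * normSqSum x + 2 * normSqSum y := by
  simp only [normSqSum, Pi.add_apply, Pi.sub_apply, normSq_add, normSq_sub,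
    ← Finset.sum_add_distrib, Finset.mul_sum]
  exact Finset.sum_congr rfl fun i _ => by ring

theorem normSqSum_I_smul (x : ι → ℂ) : normSqSum (I • x) = normSqSum x := by
  simp [normSqSum, normSq_mul]

theorem sq_norm_le_normSqSum (x : ι → ℂ) : ‖x‖ ^ 2 ≤ normSqSum x := by
  have hsq : ‖x‖ ≤ √(normSqSum x) := by
    refine (pi_norm_le_iff_of_nonneg (Real.sqrt_nonneg _)).2 fun i => ?_
    rw [← Real.sqrt_sq (norm_nonneg _), Complex.sq_norm]
    exact Real.sqrt_le_sqrt (Finset.single_le_sum (fun j _ => normSq_nonneg (x j))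
      (Finset.mem_univ i))
  calc ‖x‖ ^ 2 ≤ √(normSqSum x) ^ 2 := pow_le_pow_left₀ (norm_nonneg x) hsq 2
    _ = normSqSum x := Real.sq_sqrt (Finset.sum_nonneg fun j _ => normSq_nonneg (x j))

theorem quarterTurnSum_normSqSum (z a : ι → ℂ) (w : ℂ) :
    quarterTurnSum (fun w => normSqSum (z + w • a)) w
      = 4 * normSqSum z + 4 * normSqSum (w • a) := by
  have h₁ := normSqSum_add_add_normSqSum_sub z (w • a)
  have h₂ := normSqSum_add_add_normSqSum_sub z (I • w • a)
  rw [normSqSum_I_smul] at h₂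
  simp only [quarterTurnSum, neg_smul, mul_smul, ← sub_eq_add_neg]
  linarith

end NormSqSum

theorem SubmeanOn.le_circleAverage {E : Type*} [NormedAddCommGroup E] [NormedSpace ℂ E]
    {v : E → ℝ} {W : Set E} (hv : SubmeanOn v W) {z a : E} (hz : z ∈ W) {r : ℝ} (hr : 0 < r)
    (hdisc : ∀ t : ℂ, ‖t‖ ≤ r → z + t • a ∈ W) :
    CircleIntegrable (fun w : ℂ => v (z + w • a)) 0 r ∧
      v z ≤ circleAverage (fun w : ℂ => v (z + w • a)) 0 r := by
  obtain ⟨hint, hle⟩ := hv.2 z hz a r hr hdisc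
  simp only [CircleIntegrable, circleAverage, circleMap_zero, smul_eq_mul, ← one_div]
  exact ⟨hint, hle⟩

/-- `hψ` says that `ψ` is strictly subharmonic, in a quantitative sense, on the complex line
`z + ℂ a`. -/
theorem SubmeanOn.not_isLocalMax_add {E : Type*} [NormedAddCommGroup E] [NormedSpace ℂ E]
    {v ψ : E → ℝ} {W : Set E} {z a : E} {κ : ℝ} (hv : SubmeanOn v W) (hW : W ∈ 𝓝 z)
    (hκ : 0 < κ)
    (hψ : ∀ᶠ w in 𝓝 (0 : ℂ),
      4 * ψ z + κ * ‖w‖ ^ 2 ≤ quarterTurnSum (fun w => ψ (z + w • a)) w) :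
    ¬ IsLocalMax (fun x => v x + ψ x) z := by
  intro hmax
  have hslice : Tendsto (fun w : ℂ => z + w • a) (𝓝 0) (𝓝 z) :=
    (continuous_const.add (continuous_id.smul continuous_const)).tendsto' 0 z (by simp)
  obtain ⟨ρ, hρ, hball⟩ := Metric.eventually_nhds_iff_ball.1
    ((hslice.eventually (Filter.inter_mem hW hmax)).and hψ)
  set r := ρ / 2
  have hr : 0 < r := half_pos hρ
  have hrρ : r < ρ := half_lt_self hρ
  have hsmall : ∀ w : ℂ, ‖w‖ ≤ r → w ∈ ball (0 : ℂ) ρ := fun w hw => by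
    rw [mem_ball_zero_iff]
    linarith
  obtain ⟨hint, hmean⟩ := hv.le_circleAverage (mem_of_mem_nhds hW) hr
    fun t ht => (hball t (hsmall t ht)).1.1
  have hbound : circleAverage (fun w : ℂ => v (z + w • a)) 0 r ≤ v z - κ * r ^ 2 / 4 := by
    refine circleAverage_le_of_quarterTurnSum_le hint fun w hw => ?_
    rw [mem_sphere_zero_iff_norm, abs_of_pos hr] at hw
    have hmaxsum : quarterTurnSum (fun w => v (z + w • a) + ψ (z + w • a)) w ≤ 4 * (v z + ψ z) :=
      quarterTurnSum_le_of_forall_norm_eq fun w' hw' =>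
        (hball w' (hsmall w' (hw'.trans hw).le)).1.2
    have hψw := (hball w (hsmall w hw.le)).2
    rw [quarterTurnSum_add] at hmaxsum
    rw [hw] at hψw
    linarith
  linarith [mul_pos hκ (pow_pos hr 2)]

theorem eventually_le_quarterTurnSum_of_cHess_mulVec_eq_zero {n : ℕ} {φ : (Fin n → ℂ) → ℝ}
    {z a : Fin n → ℂ} (hφ : ContDiffAt ℝ 2 φ z) (ha : cHess φ z *ᵥ a = 0) {ε : ℝ} (hε : 0 < ε) :
    ∀ᶠ w in 𝓝 (0 : ℂ), 4 * (ε * normSqSum z - φ z) + 2 * ε * ‖a‖ ^ 2 * ‖w‖ ^ 2 ≤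
      quarterTurnSum (fun w => ε * normSqSum (z + w • a) - φ (z + w • a)) w := by
  have hd : DifferentiableAt ℝ (fderiv ℝ φ) z :=
    (hφ.fderiv_right (m := 1) le_rfl).differentiableAt one_ne_zero
  filter_upwards [hφ.eventually_quarterTurnSum_le a (half_pos hε)] with w hw
  have hflat := fderiv_fderiv_add_I_smul_eq_zero_of_cHess_mulVec_eq_zero hd
    (b := w • a) (by rw [Matrix.mulVec_smul, ha, smul_zero])
  have hq := quarterTurnSum_normSqSum z a w
  have hqa := sq_norm_le_normSqSum (w • a)
  have hsplit : quarterTurnSum (fun w => ε * normSqSum (z + w • a) - φ (z + w • a)) w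
      = ε * quarterTurnSum (fun w => normSqSum (z + w • a)) w
        - quarterTurnSum (fun w => φ (z + w • a)) w := by
    simp only [quarterTurnSum]
    ring
  rw [norm_smul] at hw hqa
  rw [hsplit, hq]
  nlinarith

theorem le_of_forall_not_isLocalMax {X : Type*} [TopologicalSpace X] {U : Set X}
    (hU : IsOpen U) (hK : IsCompact (closure U)) {v φ q : X → ℝ}
    (hv : UpperSemicontinuousOn v (closure U)) (hφ : ContinuousOn φ (closure U))
    (hq : ContinuousOn q (closure U)) (hfr : ∀ z ∈ frontier U, v z ≤ φ z)
    (hloc : ∀ ε > 0, ∀ z ∈ U, ¬ IsLocalMax (fun x => v x + (ε * q x - φ x)) z) :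
    ∀ z ∈ U, v z ≤ φ z := by
  intro z₀ hz₀
  by_contra! hlt
  have hK₀ : z₀ ∈ closure U := subset_closure hz₀
  obtain ⟨M, hM⟩ := hK.bddAbove_image hq
  have hqM : ∀ x ∈ closure U, q x ≤ M := fun x hx => hM ⟨x, hx, rfl⟩
  set ε := (v z₀ - φ z₀) / (M - q z₀ + 1)
  have hε : 0 < ε := div_pos (by linarith) (by linarith [hqM z₀ hK₀])
  have hεM : ε * (M - q z₀) < v z₀ - φ z₀ := by
    have : ε * (M - q z₀ + 1) = v z₀ - φ z₀ := div_mul_cancel₀ _ (by linarith [hqM z₀ hK₀])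
    linarith
  set u := fun x => v x + (ε * q x - φ x)
  have hu : UpperSemicontinuousOn u (closure U) :=
    hv.add ((continuousOn_const.mul hq).sub hφ).upperSemicontinuousOn
  obtain ⟨z₁, hz₁K, hz₁max⟩ := hu.exists_isMaxOn ⟨z₀, hK₀⟩ hK
  have hz₁U : z₁ ∈ U := by
    by_contra hz₁U
    have hfr₁ := hfr z₁ (by rw [hU.frontier_eq]; exact ⟨hz₁K, hz₁U⟩)
    have hmax₀ : u z₀ ≤ u z₁ := hz₁max hK₀
    simp only [u] at hmax₀
    nlinarith [hqM z₁ hz₁K]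
  exact hloc ε hε z₁ hz₁U (hz₁max.isLocalMax (mem_of_superset (hU.mem_nhds hz₁U) subset_closure))

theorem stmt16_general {n : ℕ} (Ω : Set (Fin n → ℂ)) (hΩ : IsOpen Ω)
    (φ : (Fin n → ℂ) → ℝ) (hφ : ContDiffOn ℝ 2 φ Ω)
    (hdet : ∀ z ∈ Ω, (cHess φ z).det = 0) :
    ∀ U : Set (Fin n → ℂ), IsOpen U → IsCompact (closure U) → closure U ⊆ Ω →
      ∀ (W : Set (Fin n → ℂ)) (v : (Fin n → ℂ) → ℝ),
        IsOpen W → closure U ⊆ W → W ⊆ Ω → SubmeanOn v W →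
        (∀ z ∈ frontier U, v z ≤ φ z) → ∀ z ∈ U, v z ≤ φ z := by
  intro U hU hK hKΩ W v hW hKW _ hv hfr
  refine le_of_forall_not_isLocalMax hU hK (hv.1.mono hKW) (hφ.continuousOn.mono hKΩ)
    continuous_normSqSum.continuousOn hfr fun ε hε z hz => ?_
  have hzΩ : z ∈ Ω := hKΩ (subset_closure hz)
  obtain ⟨a, ha, hker⟩ := Matrix.exists_mulVec_eq_zero_iff.2 (hdet z hzΩ)
  exact hv.not_isLocalMax_add (hW.mem_nhds (hKW (subset_closure hz)))
    (by positivity : 0 < 2 * ε * ‖a‖ ^ 2)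
    (eventually_le_quarterTurnSum_of_cHess_mulVec_eq_zero (hφ.contDiffAt (hΩ.mem_nhds hzΩ))
      hker hε)

/-- a C² psh function φ with det(Hess_ℂ φ) ≡ 0 on Ω is maximal: any
psh v defined near the closure of a relatively compact open U ⋐ Ω with v ≤ φ on ∂U
satisfies v ≤ φ on U. -/
theorem stmt16 {n : ℕ} (Ω : Set (Fin n → ℂ)) (hΩ : IsOpen Ω)
    (φ : (Fin n → ℂ) → ℝ) (hφ : ContDiffOn ℝ 2 φ Ω)
    (hpsh : ∀ z ∈ Ω, ∀ v, 0 ≤ (levi φ z v v).re)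
    (hdet : ∀ z ∈ Ω, (cHess φ z).det = 0) :
    ∀ U : Set (Fin n → ℂ), IsOpen U → IsCompact (closure U) → closure U ⊆ Ω →
      ∀ (W : Set (Fin n → ℂ)) (v : (Fin n → ℂ) → ℝ),
        IsOpen W → closure U ⊆ W → W ⊆ Ω → SubmeanOn v W →
        (∀ z ∈ frontier U, v z ≤ φ z) → ∀ z ∈ U, v z ≤ φ z :=
  stmt16_general Ω hΩ φ hφ hdet
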